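/- Let A, B₁, …, B_m ∈ M_n(𝕂), let τ₁, …, τ_m ∈ (0, r], and let L : C([-r,0],𝕂ⁿ) → 𝕂ⁿ be the continuous linear map Lψ = A ψ(0) + Σ_{k=1}^m B_k ψ(-τ_k). Then for every M¹ initial datum (φ,ξ), the mild solution x of ẋ(t) = L x_t with initial datum (φ,ξ) satisfies, for all t ≥ 0, x(t) = X^L(t) ξ + Σ_{k=1}^m ∫_{-τ_k}^0 X^L(t - τ_k - θ) B_k φ(θ) dθ, where X^L is the principal fundamental matrix solution of ẋ(t) = L x_t (recall X^L = O on [-r,0)). -/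

import Mathlib

open MeasureTheory

/-- `x` is a mild solution of `ẋ(t) = L x_t` with `M¹` initial datum `(φ, ξ)`. -/
def IsMildSol {𝕜 : Type*} [RCLike 𝕜] {n : ℕ} (r : ℝ)
    (L : C(Set.Icc (-r) (0:ℝ), Fin n → 𝕜) →L[𝕜] (Fin n → 𝕜))
    (φ : ℝ → Fin n → 𝕜) (ξ : Fin n → 𝕜) (x : ℝ → Fin n → 𝕜) : Prop :=
  (∀ θ ∈ Set.Ico (-r) (0:ℝ), x θ = φ θ) ∧ x 0 = ξ ∧
  ContinuousOn x (Set.Ici (0:ℝ)) ∧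
  ∀ t, 0 ≤ t → ∃ ψ : C(Set.Icc (-r) (0:ℝ), Fin n → 𝕜),
    (∀ θ : Set.Icc (-r) (0:ℝ), ψ θ = ∫ s in (θ : ℝ)..(t + (θ : ℝ)), x s) ∧
    x t = ξ + L ψ

/-- `X` is the principal fundamental matrix solution of `ẋ(t) = L x_t`:
`X = O` on `[-r,0)`, `X` continuous on `[0,∞)`, `X(0) = I`, and for every `ξ` and
`t ≥ 0`, `X(t)ξ = ξ + L(θ ↦ ∫_0^{max(t+θ,0)} X(s)ξ ds)`. -/
def IsPFMS {𝕜 : Type*} [RCLike 𝕜] {n : ℕ} (r : ℝ)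
    (L : C(Set.Icc (-r) (0:ℝ), Fin n → 𝕜) →L[𝕜] (Fin n → 𝕜))
    (X : ℝ → ((Fin n → 𝕜) →L[𝕜] (Fin n → 𝕜))) : Prop :=
  (∀ t ∈ Set.Ico (-r) (0:ℝ), X t = 0) ∧
  ContinuousOn X (Set.Ici (0:ℝ)) ∧ X 0 = 1 ∧
  ∀ ξ : Fin n → 𝕜, ∀ t, 0 ≤ t → ∃ ψ : C(Set.Icc (-r) (0:ℝ), Fin n → 𝕜),
    (∀ θ : Set.Icc (-r) (0:ℝ), ψ θ = ∫ s in (0:ℝ)..(max (t + (θ : ℝ)) 0), X s ξ) ∧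
    X t ξ = ξ + L ψ

set_option maxHeartbeats 1600000 in
/-- Variation of constants formula for linear differential difference equations:
for `Lψ = A ψ(0) + Σ_k B_k ψ(-τ_k)`, the mild solution with `M¹` initial datum `(φ,ξ)`
satisfies `x(t) = X^L(t)ξ + Σ_k ∫_{-τ_k}^0 X^L(t-τ_k-θ) B_k φ(θ) dθ` for `t ≥ 0`. -/
theorem stmt_12 {𝕜 : Type*} [RCLike 𝕜] {n : ℕ} (hn : 0 < n) {r : ℝ} (hr : 0 < r)
    (L : C(Set.Icc (-r) (0:ℝ), Fin n → 𝕜) →L[𝕜] (Fin n → 𝕜))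
    (A : (Fin n → 𝕜) →L[𝕜] (Fin n → 𝕜))
    {m : ℕ} (B : Fin m → ((Fin n → 𝕜) →L[𝕜] (Fin n → 𝕜)))
    (τ : Fin m → ℝ) (hτ : ∀ k, τ k ∈ Set.Ioc (0:ℝ) r)
    (hL : ∀ ψ : C(Set.Icc (-r) (0:ℝ), Fin n → 𝕜),
      L ψ = A (ψ ⟨0, Set.mem_Icc.mpr ⟨by linarith, le_rfl⟩⟩) +
        ∑ k, B k (ψ ⟨-τ k, Set.mem_Icc.mpr
          ⟨by have := (hτ k).2; linarith, by have := (hτ k).1; linarith⟩⟩))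
    (X : ℝ → ((Fin n → 𝕜) →L[𝕜] (Fin n → 𝕜))) (hX : IsPFMS r L X)
    (φ : ℝ → Fin n → 𝕜) (ξ : Fin n → 𝕜)
    (hφ : IntegrableOn φ (Set.Ico (-r) (0:ℝ)))
    (x : ℝ → Fin n → 𝕜) (hx : IsMildSol r L φ ξ x) :
    ∀ t, 0 ≤ t →
      x t = X t ξ + ∑ k, ∫ θ in (-τ k)..(0:ℝ), X (t - τ k - θ) (B k (φ θ)) := by
  classical
  obtain ⟨hX0, hXc, hX1, hXeq⟩ := hX
  obtain ⟨hxφ, hx0, hxc, hxeq⟩ := hx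
  -- ## The measurable zero-extension `Y` of `X`
  set Y : ℝ → ((Fin n → 𝕜) →L[𝕜] (Fin n → 𝕜)) :=
    Set.indicator (Set.Ici (0:ℝ)) (fun s => X (max s 0)) with hYdef
  have hYc : Continuous fun s : ℝ => X (max s 0) :=
    hXc.comp_continuous (continuous_id.max continuous_const) fun s => Set.mem_Ici.2 (le_max_right _ _)
  have hYsm : StronglyMeasurable Y := hYc.stronglyMeasurable.indicator measurableSet_Ici
  have hYneg : ∀ s : ℝ, s < 0 → Y s = 0 := fun s hs =>
    Set.indicator_of_notMem (by simpa using hs) _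
  have hYpos : ∀ s : ℝ, 0 ≤ s → Y s = X s := fun s hs => by
    rw [hYdef, Set.indicator_of_mem (by simpa using hs)]; rw [max_eq_left hs]
  have hYX : ∀ s : ℝ, -r ≤ s → Y s = X s := by
    intro s hs
    rcases le_or_gt 0 s with h | h
    · exact hYpos s h
    · rw [hYneg s h, hX0 s ⟨hs, h⟩]
  have hbound : ∀ T : ℝ, ∃ K : ℝ, 0 ≤ K ∧ ∀ s : ℝ, s ≤ T → ‖Y s‖ ≤ K := by
    intro T
    obtain ⟨K, hK⟩ := (isCompact_Icc (a := (0:ℝ)) (b := max T 0)).exists_bound_of_continuousOn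
      (hXc.mono fun u hu => hu.1)
    refine ⟨max K 0, le_max_right _ _, fun s hs => ?_⟩
    rcases le_or_gt 0 s with h | h
    · rw [hYpos s h]
      exact le_trans (hK s ⟨h, le_trans hs (le_max_left T 0)⟩) (le_max_left _ _)
    · rw [hYneg s h]; simp
  have hYoint : ∀ a b : ℝ, IntervalIntegrable Y volume a b := by
    intro a b
    obtain ⟨K, hK0, hK⟩ := hbound (max a b)
    rw [intervalIntegrable_iff]
    refine Integrable.mono' (g := fun _ => K) (integrableOn_const measure_Ioc_lt_top.ne)
      hYsm.aestronglyMeasurable.restrict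
      (((ae_restrict_mem measurableSet_uIoc).mono fun s hs => ?_))
    exact hK s hs.2
  have hYvint : ∀ (v : Fin n → 𝕜) (a b : ℝ), IntervalIntegrable (fun s => Y s v) volume a b := by
    intro v a b
    obtain ⟨K, hK0, hK⟩ := hbound (max a b)
    rw [intervalIntegrable_iff]
    refine Integrable.mono' (g := fun _ => K * ‖v‖)
      (integrableOn_const measure_Ioc_lt_top.ne)
      (_root_.StronglyMeasurable.apply_continuousLinearMap hYsm v).aestronglyMeasurable.restrict
      (((ae_restrict_mem measurableSet_uIoc).mono fun s hs => ?_))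
    exact le_trans ((Y s).le_opNorm v)
      (mul_le_mul_of_nonneg_right (hK s hs.2) (norm_nonneg v))
  -- ## The primitive `Gop` of `Y`
  set Gop : ℝ → ((Fin n → 𝕜) →L[𝕜] (Fin n → 𝕜)) := fun d => ∫ s in (0:ℝ)..d, Y s with hGdef
  have hGapp : ∀ (d : ℝ) (v : Fin n → 𝕜), (∫ s in (0:ℝ)..d, Y s v) = Gop d v := fun d v =>
    (ContinuousLinearMap.intervalIntegral_apply (hYoint 0 d) v).symm
  have hGc : Continuous Gop := intervalIntegral.continuous_primitive hYoint 0
  have hGbd : ∀ T : ℝ, 0 ≤ T → ∃ Cb : ℝ, 0 ≤ Cb ∧ ∀ d : ℝ, 0 ≤ d → d ≤ T → ‖Gop d‖ ≤ Cb := by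
    intro T hT
    obtain ⟨K, hK0, hK⟩ := hbound T
    refine ⟨K * T, mul_nonneg hK0 hT, fun d hd0 hdT => ?_⟩
    have h1 : ‖Gop d‖ ≤ K * |d - 0| := by
      apply intervalIntegral.norm_integral_le_of_norm_le_const
      intro s hs
      rw [Set.uIoc_of_le hd0] at hs
      exact hK s (le_trans hs.2 hdT)
    rw [sub_zero, abs_of_nonneg hd0] at h1
    exact le_trans h1 (mul_le_mul_of_nonneg_left hdT hK0)
  -- a.e. avoidance of `0`
  have hnull : ∀ᵐ u : ℝ, u ≠ (0:ℝ) := by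
    rw [ae_iff]
    have h : {u : ℝ | ¬u ≠ 0} = {(0:ℝ)} := by ext u; simp
    rw [h]
    exact measure_singleton 0
  -- vanishing of integrals of `Y` over negative intervals
  have hzero0 : ∀ (v : Fin n → 𝕜) (a b : ℝ), a ≤ 0 → b ≤ 0 →
      (∫ u in a..b, Y u v) = 0 := by
    intro v a b ha hb
    apply intervalIntegral.integral_zero_ae
    filter_upwards [hnull] with u hu hmem
    have h1 : u ≤ max a b := hmem.2
    have h2 : u < 0 := lt_of_le_of_ne (le_trans h1 (max_le ha hb)) hu
    rw [hYneg u h2]; rfl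
  have hzero : ∀ (v : Fin n → 𝕜) (a b : ℝ), a ≤ 0 →
      (∫ u in a..b, Y u v) = Gop (max b 0) v := by
    intro v a b ha
    rw [← hGapp]
    rcases le_or_gt 0 b with hb | hb
    · rw [max_eq_left hb,
        ← intervalIntegral.integral_add_adjacent_intervals (hYvint v a 0) (hYvint v 0 b),
        hzero0 v a 0 ha le_rfl, zero_add]
    · rw [max_eq_right hb.le, hzero0 v a b ha hb.le, intervalIntegral.integral_same]
  -- ## The key identity satisfied by `Y`
  have hXY : ∀ (v : Fin n → 𝕜) (c : ℝ), 0 ≤ c →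
      (∫ s in (0:ℝ)..c, X s v) = Gop c v := by
    intro v c hc
    rw [← hGapp]
    apply intervalIntegral.integral_congr
    intro s hs
    rw [Set.uIcc_of_le hc] at hs
    show X s v = Y s v
    rw [hYpos s hs.1]
  have hkey : ∀ (v : Fin n → 𝕜) (u : ℝ), -r ≤ u →
      Y u v = (if 0 ≤ u then v else 0) + A (Gop (max u 0) v)
        + ∑ k, B k (Gop (max (u - τ k) 0) v) := by
    intro v u hu
    rcases le_or_gt 0 u with h | h
    · obtain ⟨ψ, hψ, heq⟩ := hXeq v u h
      rw [hL ψ] at heq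
      simp only [hψ] at heq
      norm_num at heq
      have hrw : ∀ c : ℝ, (∫ s in (0:ℝ)..(max c 0), X s v) = Gop (max c 0) v :=
        fun c => hXY v _ (le_max_right _ _)
      simp only [hrw] at heq
      simp only [← sub_eq_add_neg] at heq
      rw [hYpos u h, if_pos h, heq, add_assoc]
    · rw [hYneg u h, if_neg (not_le.2 h), max_eq_right h.le]
      have h2 : ∀ k : Fin m, max (u - τ k) 0 = 0 :=
        fun k => max_eq_right (by have := (hτ k).1; linarith)
      have h3 : Gop (0:ℝ) = 0 := intervalIntegral.integral_same
      simp [h2, h3]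
  -- ## Integrability of `x`
  have hxInt : ∀ a b : ℝ, -r ≤ a → -r ≤ b → IntervalIntegrable x volume a b := by
    intro a b ha hb
    have h1 : IntegrableOn x (Set.Ico (-r) 0) :=
      hφ.congr_fun (fun θ hθ => (hxφ θ hθ).symm) measurableSet_Ico
    have h2 : IntegrableOn x (Set.Icc 0 (max (max a b) 0)) :=
      (hxc.mono Set.Icc_subset_Ici_self).integrableOn_Icc
    rw [intervalIntegrable_iff]
    apply (h1.union h2).mono_set
    intro u hu
    rcases le_or_gt 0 u with h | h
    · exact Or.inr ⟨h, le_trans hu.2 (le_max_left _ _)⟩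
    · exact Or.inl ⟨le_trans (le_min ha hb) hu.1.le, h⟩
  -- ## The mild solution equation, rewritten
  have hmild : ∀ t : ℝ, 0 ≤ t →
      x t = ξ + (A (∫ s in (0:ℝ)..t, x s)
        + ∑ k, B k (∫ s in (-τ k)..(t - τ k), x s)) := by
    intro t ht
    obtain ⟨ψ, hψ, heq⟩ := hxeq t ht
    rw [hL ψ] at heq
    simp only [hψ] at heq
    norm_num at heq
    simp only [← sub_eq_add_neg] at heq
    exact heq
  have hsplit : ∀ (c t : ℝ), 0 < c → c ≤ r → 0 ≤ t →
      (∫ s in (-c)..(t - c), x s)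
        = (∫ θ in (-c)..(min (t - c) 0), φ θ) + ∫ s in (0:ℝ)..(max (t - c) 0), x s := by
    intro c t hc hcr ht
    have hrc : -r ≤ -c := neg_le_neg hcr
    rcases le_or_gt c t with h | h
    · have h1 : (0:ℝ) ≤ t - c := by linarith
      rw [min_eq_right h1, max_eq_left h1,
        ← intervalIntegral.integral_add_adjacent_intervals (hxInt (-c) 0 hrc (by linarith))
          (hxInt 0 (t - c) (by linarith) (by linarith))]
      congr 1
      apply intervalIntegral.integral_congr_ae
      filter_upwards [hnull] with u hu hmem
      rw [Set.uIoc_of_le (by linarith : -c ≤ (0:ℝ))] at hmem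
      exact hxφ u ⟨by linarith [hmem.1], lt_of_le_of_ne hmem.2 hu⟩
    · have h1 : t - c < 0 := by linarith
      rw [min_eq_left h1.le, max_eq_right h1.le, intervalIntegral.integral_same, add_zero]
      apply intervalIntegral.integral_congr
      intro u hu
      rw [Set.uIcc_of_le (by linarith : -c ≤ t - c)] at hu
      exact hxφ u ⟨by linarith [hu.1], lt_of_le_of_lt hu.2 h1⟩
  -- ## Integrability of φ on delay intervals
  have hφk : ∀ k : Fin m, IntegrableOn φ (Set.Ioc (-τ k) 0) := by
    intro k
    have h1 : IntegrableOn φ (Set.Ico (-τ k) 0) :=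
      hφ.mono_set (Set.Ico_subset_Ico (neg_le_neg (hτ k).2) le_rfl)
    rwa [IntegrableOn, Measure.restrict_congr_set Ico_ae_eq_Ioc] at h1
  have hφiint : ∀ (k : Fin m) (b : ℝ), -τ k ≤ b → b ≤ 0 →
      IntervalIntegrable φ volume (-τ k) b := by
    intro k b hb1 hb2
    rw [intervalIntegrable_iff, Set.uIoc_of_le hb1]
    exact (hφk k).mono_set (Set.Ioc_subset_Ioc le_rfl hb2)
  have hBφ : ∀ k : Fin m, Integrable (fun θ => B k (φ θ))
      (volume.restrict (Set.Ioc (-τ k) 0)) := fun k => (B k).integrable_comp (hφk k)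
  -- ## The convolution terms `w`
  set w : Fin m → ℝ → (Fin n → 𝕜) :=
    fun j s => ∫ θ in (-τ j)..(0:ℝ), Y (s - τ j - θ) (B j (φ θ)) with hwdef
  have hwset : ∀ (j : Fin m) (s : ℝ),
      w j s = ∫ θ in Set.Ioc (-τ j) (0:ℝ), Y (s - τ j - θ) (B j (φ θ)) := fun j s =>
    intervalIntegral.integral_of_le (by have := (hτ j).1; linarith)
  -- ## Product integrability for Fubini
  have hprod : ∀ (j : Fin m) (c : ℝ), 0 ≤ c →
      Integrable (Function.uncurry fun s θ => Y (s - τ j - θ) (B j (φ θ)))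
        ((volume.restrict (Set.Ioc (0:ℝ) c)).prod
          (volume.restrict (Set.Ioc (-τ j) (0:ℝ)))) := by
    intro j c hc
    obtain ⟨K, hK0, hK⟩ := hbound c
    have hmeas : AEStronglyMeasurable (Function.uncurry fun s θ => Y (s - τ j - θ) (B j (φ θ)))
        ((volume.restrict (Set.Ioc (0:ℝ) c)).prod (volume.restrict (Set.Ioc (-τ j) (0:ℝ)))) := by
      apply ContinuousLinearMap.aestronglyMeasurable_comp₂
        ((ContinuousLinearMap.apply 𝕜 (Fin n → 𝕜)).flip)
      · exact (hYsm.comp_measurable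
          ((measurable_fst.sub measurable_const).sub measurable_snd)).aestronglyMeasurable
      · exact (B j).continuous.comp_aestronglyMeasurable ((hφk j).aestronglyMeasurable.comp_snd)
    have hmem : ∀ᵐ p : ℝ × ℝ ∂((volume.restrict (Set.Ioc (0:ℝ) c)).prod
        (volume.restrict (Set.Ioc (-τ j) (0:ℝ)))),
        p ∈ (Set.Ioc (0:ℝ) c) ×ˢ (Set.Ioc (-τ j) (0:ℝ)) := by
      rw [Measure.prod_restrict]
      exact ae_restrict_mem (measurableSet_Ioc.prod measurableSet_Ioc)
    refine Integrable.mono' (g := fun p => K * ‖B j (φ p.2)‖) ?_ hmeas ?_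
    · apply Integrable.const_mul
      rw [integrable_prod_iff ((hBφ j).norm.aestronglyMeasurable.comp_snd)]
      constructor
      · exact Filter.Eventually.of_forall fun s => (hBφ j).norm
      · have hco : IntegrableOn
            (fun _ : ℝ => (∫ θ in Set.Ioc (-τ j) (0:ℝ), ‖‖B j (φ θ)‖‖))
            (Set.Ioc (0:ℝ) c) volume := integrableOn_const measure_Ioc_lt_top.ne
        exact hco
    · filter_upwards [hmem] with p hp
      have h1 : p.1 - τ j - p.2 ≤ c := by
        have := hp.1.2; have := hp.2.1; have := (hτ j).1; linarith
      calc ‖Y (p.1 - τ j - p.2) (B j (φ p.2))‖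
          ≤ ‖Y (p.1 - τ j - p.2)‖ * ‖B j (φ p.2)‖ := (Y _).le_opNorm _
        _ ≤ K * ‖B j (φ p.2)‖ :=
            mul_le_mul_of_nonneg_right (hK _ h1) (norm_nonneg _)
  -- ## Integrability of `w` and Fubini
  have hwint : ∀ (j : Fin m) (c : ℝ), 0 ≤ c → IntervalIntegrable (w j) volume 0 c := by
    intro j c hc
    rw [intervalIntegrable_iff, Set.uIoc_of_le hc]
    have h := (hprod j c hc).integral_prod_left
    exact h.congr (Filter.Eventually.of_forall fun s => (hwset j s).symm)
  have hfub : ∀ (j : Fin m) (c : ℝ), 0 ≤ c →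
      (∫ s in (0:ℝ)..c, w j s)
        = ∫ θ in (-τ j)..(0:ℝ), Gop (max (c - τ j - θ) 0) (B j (φ θ)) := by
    intro j c hc
    have hτj : (0:ℝ) < τ j := (hτ j).1
    rw [intervalIntegral.integral_of_le hc,
      intervalIntegral.integral_of_le (by linarith : -τ j ≤ (0:ℝ))]
    calc (∫ s in Set.Ioc (0:ℝ) c, w j s)
        = ∫ s in Set.Ioc (0:ℝ) c, ∫ θ in Set.Ioc (-τ j) (0:ℝ), Y (s - τ j - θ) (B j (φ θ)) :=
          setIntegral_congr_fun measurableSet_Ioc fun s _ => hwset j s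
      _ = ∫ θ in Set.Ioc (-τ j) (0:ℝ), ∫ s in Set.Ioc (0:ℝ) c, Y (s - τ j - θ) (B j (φ θ)) :=
          MeasureTheory.integral_integral_swap (hprod j c hc)
      _ = ∫ θ in Set.Ioc (-τ j) (0:ℝ), Gop (max (c - τ j - θ) 0) (B j (φ θ)) := by
          apply setIntegral_congr_fun measurableSet_Ioc
          intro θ hθ
          have h1 : (0:ℝ) ≤ τ j + θ := by have := hθ.1; linarith
          show (∫ s in Set.Ioc (0:ℝ) c, Y (s - τ j - θ) (B j (φ θ)))
            = Gop (max (c - τ j - θ) 0) (B j (φ θ))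
          rw [← intervalIntegral.integral_of_le hc]
          have h2 : ∀ s : ℝ, s - τ j - θ = s - (τ j + θ) := fun s => by ring
          simp only [h2]
          rw [intervalIntegral.integral_comp_sub_right (fun u => Y u (B j (φ θ))) (τ j + θ),
            hzero (B j (φ θ)) _ _ (by linarith : (0:ℝ) - (τ j + θ) ≤ 0)]
  -- ## interval integrability helpers
  have hCLMii : ∀ (D : (Fin n → 𝕜) →L[𝕜] (Fin n → 𝕜)) (f : ℝ → Fin n → 𝕜) (a b : ℝ),
      IntervalIntegrable f volume a b → IntervalIntegrable (fun u => D (f u)) volume a b := by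
    intro D f a b hf
    rw [intervalIntegrable_iff] at hf ⊢
    exact D.integrable_comp hf
  have hauxf : ∀ (j : Fin m) (η : ℝ → ℝ) (Cb : ℝ), Continuous η →
      (∀ θ ∈ Set.Ioc (-τ j) (0:ℝ), ‖Gop (η θ)‖ ≤ Cb) →
      IntervalIntegrable (fun θ => Gop (η θ) (B j (φ θ))) volume (-τ j) 0 := by
    intro j η Cb hη hb
    have hτj : (0:ℝ) < τ j := (hτ j).1
    rw [intervalIntegrable_iff, Set.uIoc_of_le (by linarith : -τ j ≤ (0:ℝ))]
    have hmeas : AEStronglyMeasurable (fun θ => Gop (η θ) (B j (φ θ)))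
        (volume.restrict (Set.Ioc (-τ j) (0:ℝ))) := by
      have h := ContinuousLinearMap.aestronglyMeasurable_comp₂
        ((ContinuousLinearMap.apply 𝕜 (Fin n → 𝕜)).flip)
        ((hGc.comp hη).aestronglyMeasurable (μ := volume.restrict (Set.Ioc (-τ j) (0:ℝ))))
        ((hBφ j).aestronglyMeasurable)
      exact h
    refine Integrable.mono' (g := fun θ => Cb * ‖B j (φ θ)‖) ((hBφ j).norm.const_mul Cb) hmeas ?_
    refine (ae_restrict_mem measurableSet_Ioc).mono fun θ hθ => ?_
    calc ‖Gop (η θ) (B j (φ θ))‖ ≤ ‖Gop (η θ)‖ * ‖B j (φ θ)‖ := (Gop _).le_opNorm _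
      _ ≤ Cb * ‖B j (φ θ)‖ := mul_le_mul_of_nonneg_right (hb θ hθ) (norm_nonneg _)
  have hGint : ∀ (j : Fin m) (c : ℝ),
      IntervalIntegrable (fun θ => Gop (max (c - θ) 0) (B j (φ θ))) volume (-τ j) 0 := by
    intro j c
    have hτj : (0:ℝ) < τ j := (hτ j).1
    have hT : (0:ℝ) ≤ max c 0 + τ j := by have := le_max_right c 0; linarith
    obtain ⟨Cb, hCb0, hCb⟩ := hGbd (max c 0 + τ j) hT
    apply hauxf j _ Cb ((continuous_const.sub continuous_id).max continuous_const)
    intro θ hθ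
    apply hCb _ (le_max_right _ _)
    have h1 : c - θ ≤ max c 0 + τ j := by
      have := hθ.1; have := le_max_left c 0; linarith
    exact max_le h1 hT
  -- ## The integral equation satisfied by `w j`
  have hweq : ∀ (j : Fin m) (t : ℝ), 0 ≤ t →
      w j t = B j (∫ θ in (-τ j)..(min (t - τ j) 0), φ θ)
        + A (∫ s in (0:ℝ)..t, w j s)
        + ∑ k, B k (∫ s in (0:ℝ)..(max (t - τ k) 0), w j s) := by
    intro j t ht
    have hτj : (0:ℝ) < τ j := (hτ j).1
    have hτjr : τ j ≤ r := (hτ j).2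
    have e1 : w j t = ∫ θ in (-τ j)..(0:ℝ),
        ((if θ ≤ t - τ j then B j (φ θ) else 0)
          + A (Gop (max (t - τ j - θ) 0) (B j (φ θ)))
          + ∑ k, B k (Gop (max (t - τ j - τ k - θ) 0) (B j (φ θ)))) := by
      apply intervalIntegral.integral_congr
      intro θ hθ
      rw [Set.uIcc_of_le (by linarith : -τ j ≤ (0:ℝ))] at hθ
      have hrange : -r ≤ t - τ j - θ := by
        have := hθ.1; have := hθ.2; linarith
      show Y (t - τ j - θ) (B j (φ θ)) = _
      rw [hkey (B j (φ θ)) (t - τ j - θ) hrange]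
      have e_if : (if 0 ≤ t - τ j - θ then B j (φ θ) else 0)
          = (if θ ≤ t - τ j then B j (φ θ) else 0) := by
        apply if_congr _ rfl rfl; constructor <;> intro <;> linarith
      have e_k : ∀ k : Fin m, t - τ j - θ - τ k = t - τ j - τ k - θ := fun k => by ring
      rw [e_if]
      simp only [e_k]
    have hi1 : IntervalIntegrable (fun θ => if θ ≤ t - τ j then B j (φ θ) else 0)
        volume (-τ j) 0 := by
      have hfe : (fun θ : ℝ => if θ ≤ t - τ j then B j (φ θ) else 0)
          = Set.indicator {θ : ℝ | θ ≤ t - τ j} fun θ => B j (φ θ) := by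
        funext θ
        by_cases h : θ ≤ t - τ j
        · rw [if_pos h]
          exact (Set.indicator_of_mem (show θ ∈ {θ : ℝ | θ ≤ t - τ j} from h)
            (fun θ => B j (φ θ))).symm
        · rw [if_neg h]
          exact (Set.indicator_of_notMem (show θ ∉ {θ : ℝ | θ ≤ t - τ j} from h)
            (fun θ => B j (φ θ))).symm
      rw [hfe, intervalIntegrable_iff, Set.uIoc_of_le (by linarith : -τ j ≤ (0:ℝ))]
      exact (hBφ j).indicator measurableSet_Iic
    have hi2 : IntervalIntegrable
        (fun θ => A (Gop (max (t - τ j - θ) 0) (B j (φ θ)))) volume (-τ j) 0 :=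
      hCLMii A _ _ _ (hGint j (t - τ j))
    have hi3k : ∀ k : Fin m, IntervalIntegrable
        (fun θ => B k (Gop (max (t - τ j - τ k - θ) 0) (B j (φ θ)))) volume (-τ j) 0 :=
      fun k => hCLMii (B k) _ _ _ (hGint j (t - τ j - τ k))
    have hi3 : IntervalIntegrable
        (fun θ => ∑ k, B k (Gop (max (t - τ j - τ k - θ) 0) (B j (φ θ)))) volume (-τ j) 0 := by
      rw [intervalIntegrable_iff]
      exact integrable_finset_sum _ fun k _ => intervalIntegrable_iff.1 (hi3k k)
    rw [e1, intervalIntegral.integral_add (hi1.add hi2) hi3,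
      intervalIntegral.integral_add hi1 hi2]
    congr 1
    congr 1
    · -- indicator term
      have hmem : min (t - τ j) 0 ∈ Set.Icc (-τ j) (0:ℝ) :=
        ⟨le_min (by linarith) (by linarith), min_le_right _ _⟩
      calc (∫ θ in (-τ j)..(0:ℝ), if θ ≤ t - τ j then B j (φ θ) else 0)
          = ∫ θ in (-τ j)..(0:ℝ),
              Set.indicator {θ : ℝ | θ ≤ min (t - τ j) 0} (fun θ => B j (φ θ)) θ := by
            apply intervalIntegral.integral_congr
            intro θ hθ
            rw [Set.uIcc_of_le (by linarith : -τ j ≤ (0:ℝ))] at hθ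
            rw [Set.indicator_apply]
            apply if_congr _ rfl rfl
            simp only [Set.mem_setOf_eq, le_min_iff]
            exact ⟨fun h' => ⟨h', hθ.2⟩, fun h' => h'.1⟩
        _ = ∫ θ in (-τ j)..(min (t - τ j) 0), B j (φ θ) :=
            intervalIntegral.integral_indicator hmem
        _ = B j (∫ θ in (-τ j)..(min (t - τ j) 0), φ θ) :=
            ContinuousLinearMap.intervalIntegral_comp_comm _ (hφiint j _ hmem.1 hmem.2)
    · -- A term
      rw [ContinuousLinearMap.intervalIntegral_comp_comm A (hGint j (t - τ j))]
      congr 1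
      exact (hfub j t ht).symm
    · -- B k terms
      rw [intervalIntegral.integral_finset_sum fun k _ => hi3k k]
      apply Finset.sum_congr rfl
      intro k _
      rw [ContinuousLinearMap.intervalIntegral_comp_comm (B k) (hGint j (t - τ j - τ k))]
      congr 1
      rw [hfub j (max (t - τ k) 0) (le_max_right _ _)]
      apply intervalIntegral.integral_congr
      intro θ hθ
      rw [Set.uIcc_of_le (by linarith : -τ j ≤ (0:ℝ))] at hθ
      have hmx : max (max (t - τ k) 0 - τ j - θ) 0 = max (t - τ j - τ k - θ) 0 := by
        rcases le_or_gt 0 (t - τ k) with h' | h'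
        · rw [max_eq_left h']
          have : t - τ k - τ j - θ = t - τ j - τ k - θ := by ring
          rw [this]
        · rw [max_eq_right h'.le,
            max_eq_right (by linarith [hθ.1] : (0:ℝ) - τ j - θ ≤ 0),
            max_eq_right (by linarith [hθ.1] : t - τ j - τ k - θ ≤ 0)]
      show Gop (max (t - τ j - τ k - θ) 0) (B j (φ θ))
        = Gop (max (max (t - τ k) 0 - τ j - θ) 0) (B j (φ θ))
      rw [hmx]
  -- ## The difference `z` and its Volterra equation
  set z : ℝ → Fin n → 𝕜 := fun s => x s - Y s ξ - ∑ j, w j s with hzdef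
  have hwSumInt : ∀ c : ℝ, 0 ≤ c → IntervalIntegrable (fun s => ∑ j, w j s) volume 0 c := by
    intro c hc
    rw [intervalIntegrable_iff]
    exact integrable_finset_sum _ fun j _ => intervalIntegrable_iff.1 (hwint j c hc)
  have hzint : ∀ c : ℝ, 0 ≤ c → IntervalIntegrable z volume 0 c := fun c hc =>
    ((hxInt 0 c (by linarith) (by linarith)).sub (hYvint ξ 0 c)).sub (hwSumInt c hc)
  have hzdec : ∀ c : ℝ, 0 ≤ c → (∫ s in (0:ℝ)..c, z s)
      = (∫ s in (0:ℝ)..c, x s) - Gop c ξ - ∑ j, ∫ s in (0:ℝ)..c, w j s := by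
    intro c hc
    simp only [hzdef]
    rw [intervalIntegral.integral_sub
        ((hxInt 0 c (by linarith) (by linarith)).sub (hYvint ξ 0 c)) (hwSumInt c hc),
      intervalIntegral.integral_sub (hxInt 0 c (by linarith) (by linarith)) (hYvint ξ 0 c),
      intervalIntegral.integral_finset_sum fun j _ => hwint j c hc, hGapp]
  have hzeq : ∀ t : ℝ, 0 ≤ t → z t = A (∫ s in (0:ℝ)..t, z s)
      + ∑ k, B k (∫ s in (0:ℝ)..(max (t - τ k) 0), z s) := by
    intro t ht
    have h1 := hmild t ht
    have h2 : ∀ k : Fin m, (∫ s in (-τ k)..(t - τ k), x s)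
        = (∫ θ in (-τ k)..(min (t - τ k) 0), φ θ)
          + ∫ s in (0:ℝ)..(max (t - τ k) 0), x s :=
      fun k => hsplit (τ k) t (hτ k).1 (hτ k).2 ht
    simp only [h2] at h1
    have h3 := hkey ξ t (by linarith)
    rw [if_pos ht, max_eq_left ht] at h3
    show x t - Y t ξ - ∑ j, w j t = _
    rw [h1, h3, Finset.sum_congr rfl fun j _ => hweq j t ht, hzdec t ht]
    have h5 : ∀ k : Fin m, (∫ s in (0:ℝ)..(max (t - τ k) 0), z s)
        = (∫ s in (0:ℝ)..(max (t - τ k) 0), x s) - Gop (max (t - τ k) 0) ξ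
          - ∑ j, ∫ s in (0:ℝ)..(max (t - τ k) 0), w j s :=
      fun k => hzdec _ (le_max_right _ _)
    simp only [h5, map_sub, map_add, map_sum, Finset.sum_add_distrib, Finset.sum_sub_distrib]
    have hcomm : (∑ j : Fin m, ∑ k : Fin m, B k (∫ s in (0:ℝ)..(max (t - τ k) 0), w j s))
        = ∑ k : Fin m, ∑ j : Fin m, B k (∫ s in (0:ℝ)..(max (t - τ k) 0), w j s) :=
      Finset.sum_comm
    rw [hcomm]
    abel
  -- ## Gronwall-type iteration: z vanishes on [0,∞)
  intro t ht
  set C : ℝ := ‖A‖ + ∑ k, ‖B k‖ with hCdef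
  have hC0 : 0 ≤ C := by positivity
  have hnormint : ∀ c : ℝ, 0 ≤ c → IntervalIntegrable (fun u => ‖z u‖) volume 0 c :=
    fun c hc => (hzint c hc).norm
  have hnn : ∀ c : ℝ, 0 ≤ c → 0 ≤ ∫ u in (0:ℝ)..c, ‖z u‖ :=
    fun c hc => intervalIntegral.integral_nonneg hc fun u _ => norm_nonneg _
  have hmono : ∀ a b : ℝ, 0 ≤ a → a ≤ b →
      (∫ u in (0:ℝ)..a, ‖z u‖) ≤ ∫ u in (0:ℝ)..b, ‖z u‖ := by
    intro a b ha hab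
    have hab' : IntervalIntegrable (fun u => ‖z u‖) volume a b :=
      (hnormint b (le_trans ha hab)).mono_set
        (by rw [Set.uIcc_of_le hab, Set.uIcc_of_le (le_trans ha hab)]
            exact Set.Icc_subset_Icc ha le_rfl)
    have h2 : 0 ≤ ∫ u in a..b, ‖z u‖ :=
      intervalIntegral.integral_nonneg hab fun u _ => norm_nonneg _
    have h3 := intervalIntegral.integral_add_adjacent_intervals (hnormint a ha) hab'
    linarith
  have hni : ∀ c : ℝ, 0 ≤ c → ‖∫ u in (0:ℝ)..c, z u‖ ≤ ∫ u in (0:ℝ)..c, ‖z u‖ := by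
    intro c hc
    have h := intervalIntegral.norm_integral_le_abs_integral_norm (f := z) (a := 0) (b := c)
      (μ := volume)
    rwa [abs_of_nonneg (hnn c hc)] at h
  have hz1 : ∀ s : ℝ, 0 ≤ s → s ≤ t → ‖z s‖ ≤ C * ∫ u in (0:ℝ)..s, ‖z u‖ := by
    intro s hs hst
    rw [hzeq s hs]
    have hIs : 0 ≤ ∫ u in (0:ℝ)..s, ‖z u‖ := hnn s hs
    have hb1 : ‖A (∫ u in (0:ℝ)..s, z u)‖ ≤ ‖A‖ * ∫ u in (0:ℝ)..s, ‖z u‖ :=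
      le_trans (A.le_opNorm _) (mul_le_mul_of_nonneg_left (hni s hs) (norm_nonneg A))
    have hb2 : ∀ k : Fin m, ‖B k (∫ u in (0:ℝ)..(max (s - τ k) 0), z u)‖
        ≤ ‖B k‖ * ∫ u in (0:ℝ)..s, ‖z u‖ := by
      intro k
      refine le_trans ((B k).le_opNorm _) (mul_le_mul_of_nonneg_left ?_ (norm_nonneg (B k)))
      refine le_trans (hni _ (le_max_right _ _)) (hmono _ s (le_max_right _ _) ?_)
      exact max_le (by have := (hτ k).1; linarith) hs
    calc ‖A (∫ u in (0:ℝ)..s, z u) + ∑ k, B k (∫ u in (0:ℝ)..(max (s - τ k) 0), z u)‖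
        ≤ ‖A (∫ u in (0:ℝ)..s, z u)‖
          + ∑ k, ‖B k (∫ u in (0:ℝ)..(max (s - τ k) 0), z u)‖ :=
          le_trans (norm_add_le _ _) (by gcongr; exact norm_sum_le _ _)
      _ ≤ ‖A‖ * (∫ u in (0:ℝ)..s, ‖z u‖)
          + ∑ k, ‖B k‖ * ∫ u in (0:ℝ)..s, ‖z u‖ := by
          gcongr with k hk
          · exact hb2 k
      _ = C * ∫ u in (0:ℝ)..s, ‖z u‖ := by rw [hCdef, ← Finset.sum_mul]; ring
  set M : ℝ := C * ∫ u in (0:ℝ)..t, ‖z u‖ with hMdef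
  have hM0 : 0 ≤ M := mul_nonneg hC0 (hnn t ht)
  have hiter : ∀ N : ℕ, ∀ s : ℝ, 0 ≤ s → s ≤ t →
      ‖z s‖ ≤ M * (C * s) ^ N / N.factorial := by
    intro N
    induction N with
    | zero =>
      intro s hs hst
      simpa using le_trans (hz1 s hs hst)
        (mul_le_mul_of_nonneg_left (hmono s t hs hst) hC0)
    | succ N ih =>
      intro s hs hst
      have hpoly : IntervalIntegrable (fun u : ℝ => M * (C * u) ^ N / N.factorial)
          volume 0 s :=
        (((continuous_const.mul ((continuous_const.mul continuous_id).pow N)).div_const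
          _).intervalIntegrable 0 s)
      have step : (∫ u in (0:ℝ)..s, ‖z u‖)
          ≤ ∫ u in (0:ℝ)..s, M * (C * u) ^ N / N.factorial := by
        apply intervalIntegral.integral_mono_on hs (hnormint s hs) hpoly
        intro u hu
        exact ih u hu.1 (le_trans hu.2 hst)
      have hcalc : (∫ u in (0:ℝ)..s, M * (C * u) ^ N / N.factorial)
          = (M * C ^ N / N.factorial) * (s ^ (N + 1) / (N + 1)) := by
        rw [show (fun u : ℝ => M * (C * u) ^ N / N.factorial)
            = fun u : ℝ => (M * C ^ N / N.factorial) * u ^ N from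
          funext fun u => by rw [mul_pow]; ring]
        rw [intervalIntegral.integral_const_mul, integral_pow]
        ring
      have hNf : (0:ℝ) < N.factorial := by exact_mod_cast N.factorial_pos
      have hN1 : (0:ℝ) < (N:ℝ) + 1 := by positivity
      calc ‖z s‖ ≤ C * ∫ u in (0:ℝ)..s, ‖z u‖ := hz1 s hs hst
        _ ≤ C * ((M * C ^ N / N.factorial) * (s ^ (N + 1) / (N + 1))) := by
            rw [← hcalc]; exact mul_le_mul_of_nonneg_left step hC0
        _ = M * (C * s) ^ (N + 1) / (N + 1).factorial := by
            rw [Nat.factorial_succ, mul_pow]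
            push_cast
            field_simp
            ring
  have hlim : Filter.Tendsto (fun N : ℕ => M * (C * t) ^ N / N.factorial)
      Filter.atTop (nhds 0) := by
    have h := FloorSemiring.tendsto_pow_div_factorial_atTop (K := ℝ) (C * t)
    have h2 := h.const_mul M
    simpa [mul_div_assoc] using h2
  have hz0 : ‖z t‖ ≤ 0 := ge_of_tendsto' hlim fun N => hiter N t ht le_rfl
  have hzt : x t - Y t ξ - ∑ j, w j t = 0 := norm_le_zero_iff.1 hz0
  -- ## Conclusion
  have hxt : x t = Y t ξ + ∑ j, w j t := by
    rw [sub_sub] at hzt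
    rw [sub_eq_zero.1 hzt]
  rw [hxt, hYX t (by linarith)]
  congr 1
  apply Finset.sum_congr rfl
  intro k _
  show (∫ θ in (-τ k)..(0:ℝ), Y (t - τ k - θ) (B k (φ θ)))
    = ∫ θ in (-τ k)..(0:ℝ), X (t - τ k - θ) (B k (φ θ))
  apply intervalIntegral.integral_congr
  intro θ hθ
  rw [Set.uIcc_of_le (by have := (hτ k).1; linarith : -τ k ≤ (0:ℝ))] at hθ
  show Y (t - τ k - θ) (B k (φ θ)) = X (t - τ k - θ) (B k (φ θ))
  rw [hYX _ (by have := (hτ k).2; have := hθ.1; have := hθ.2; linarith)]
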